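/- (Impossible singular vector fusion) Let {u_{λ_j}}_{j=1}^n be K-normalised singular vectors satisfying K-orthogonality and the SUB0 condition, and let γ_j > 0 with λ_j/γ_j < λ_{j+1}/γ_{j+1}. Then for any subset {u_{λ_{j_k}}}_{k=1}^m with m ≥ 2 ordered so that λ_{j_k}/γ_{j_k} < λ_{j_{k+1}}/γ_{j_{k+1}}, the vector w = Σ_{k=1}^m γ_{j_k} u_{λ_{j_k}} is not a singular vector; i.e. (J(w)/‖Kw‖²) K*K w ∉ ∂J(w). -/

import Mathlib

/-!
Write `w = ∑ γ_j u_j` and `μ = J(w) / ‖Kw‖²`, and suppose `μ K*K w ∈ ∂J(w)`.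
Since `⟨μ K*K w, w⟩ = J(w)`, the subgradient inequality says `⟨μ K*K w, v⟩ ≤ J(v)` for every `v`;
at `v = u_j` this is `μ γ_j ≤ λ_j`. On the other hand SUB0, tested at `w`, gives
`∑ λ_j γ_j ≤ J(w) = μ ∑ γ_j²`. Hence `∑ γ_j (λ_j - μ γ_j) ≤ 0` with nonnegative terms, so every
ratio `λ_j / γ_j` equals `μ`, contradicting the strict ordering of the ratios.
-/

open RealInnerProductSpace Finset

/-- The subdifferential of `J` at `u`. -/
def subdiff {U : Type*} [NormedAddCommGroup U] [NormedSpace ℝ U]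
    (J : U → ℝ) (u : U) : Set (U →L[ℝ] ℝ) :=
  {p | ∀ v : U, J u + p (v - u) ≤ J v}

/-- The Banach adjoint `K*` applied to `w ∈ H`. -/
noncomputable def Kstar {U H : Type*} [NormedAddCommGroup U] [NormedSpace ℝ U]
    [NormedAddCommGroup H] [InnerProductSpace ℝ H]
    (K : U →L[ℝ] H) (w : H) : U →L[ℝ] ℝ :=
  ((innerSL ℝ) w).comp K

@[simp]
lemma Kstar_apply {U H : Type*} [NormedAddCommGroup U] [NormedSpace ℝ U]
    [NormedAddCommGroup H] [InnerProductSpace ℝ H] (K : U →L[ℝ] H) (w : H) (v : U) :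
    Kstar K w v = ⟪w, K v⟫ :=
  rfl

lemma apply_le_of_mem_subdiff {U : Type*} [NormedAddCommGroup U] [NormedSpace ℝ U]
    {J : U → ℝ} {u : U} {p : U →L[ℝ] ℝ} (hp : p ∈ subdiff J u) (hpu : p u = J u) (v : U) :
    p v ≤ J v := by
  have := hp v
  rw [map_sub, hpu] at this
  linarith

lemma eq_mul_of_sum_mul_le {ι : Type*} {s : Finset ι} {a γ : ι → ℝ} {μ : ℝ}
    (hγ : ∀ i ∈ s, 0 < γ i) (hle : ∀ i ∈ s, μ * γ i ≤ a i)
    (hsum : ∑ i ∈ s, a i * γ i ≤ μ * ∑ i ∈ s, γ i ^ 2) :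
    ∀ i ∈ s, a i = μ * γ i := by
  have hterm : ∀ i ∈ s, μ * γ i * γ i ≤ a i * γ i := fun i hi =>
    mul_le_mul_of_nonneg_right (hle i hi) (hγ i hi).le
  have heq : ∑ i ∈ s, μ * γ i * γ i = ∑ i ∈ s, a i * γ i := by
    refine le_antisymm (sum_le_sum hterm) (hsum.trans_eq ?_)
    rw [mul_sum]
    exact sum_congr rfl fun i _ => by ring
  intro i hi
  exact (mul_right_cancel₀ (hγ i hi).ne' ((sum_eq_sum_iff_of_le hterm).1 heq i hi)).symm

lemma injOn_range_of_lt_succ {β : Type*} [Preorder β] {m : ℕ} {f : ℕ → ℕ} {r : ℕ → β}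
    (h : ∀ k, k + 1 < m → r (f k) < r (f (k + 1))) : Set.InjOn f (range m) := by
  have := strictMonoOn_Iic_of_lt_succ (ψ := r ∘ f) (n := m - 1) fun k hk => h k (by omega)
  refine this.injOn.of_comp.mono fun k hk => ?_
  simp only [coe_range, Set.mem_Iio, Set.mem_Iic] at hk ⊢
  omega

section Orthonormal

variable {ι H : Type*} [DecidableEq ι] [NormedAddCommGroup H] [InnerProductSpace ℝ H]
  {e : ι → H} {s t : Finset ι}

lemma inner_sum_smul_eq_ite (hnorm : ∀ i ∈ t, ‖e i‖ = 1)
    (horth : ∀ i ∈ t, ∀ j ∈ t, i ≠ j → ⟪e i, e j⟫ = 0) (hst : s ⊆ t) (c : ι → ℝ)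
    {i : ι} (hi : i ∈ t) :
    ⟪e i, ∑ j ∈ s, c j • e j⟫ = if i ∈ s then c i else 0 := by
  rw [inner_sum, ← sum_ite_eq s i c]
  refine sum_congr rfl fun j hj => ?_
  rw [real_inner_smul_right]
  split_ifs with hij
  · rw [← hij, real_inner_self_eq_norm_sq, hnorm i hi, one_pow, mul_one]
  · rw [horth i hi j (hst hj) hij, mul_zero]

lemma sum_mul_inner_sum_smul (hnorm : ∀ i ∈ t, ‖e i‖ = 1)
    (horth : ∀ i ∈ t, ∀ j ∈ t, i ≠ j → ⟪e i, e j⟫ = 0) (hst : s ⊆ t) (a c : ι → ℝ) :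
    ∑ i ∈ t, a i * ⟪e i, ∑ j ∈ s, c j • e j⟫ = ∑ j ∈ s, a j * c j := by
  calc ∑ i ∈ t, a i * ⟪e i, ∑ j ∈ s, c j • e j⟫
      = ∑ i ∈ t, if i ∈ s then a i * c i else 0 := sum_congr rfl fun i hi => by
        rw [inner_sum_smul_eq_ite hnorm horth hst c hi, mul_ite, mul_zero]
    _ = ∑ j ∈ s, a j * c j := by rw [sum_ite_mem, inter_eq_right.2 hst]

end Orthonormal

section Fusion

variable {U H ι : Type*} [NormedAddCommGroup U] [NormedSpace ℝ U]
  [NormedAddCommGroup H] [InnerProductSpace ℝ H] [DecidableEq ι]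
  {K : U →L[ℝ] H} {J : U → ℝ} {u : ι → U} {lam γ : ι → ℝ} {s t : Finset ι}

theorem div_eq_of_fusion_mem_subdiff (hJ0 : J 0 = 0)
    (hnorm : ∀ i ∈ t, ‖K (u i)‖ = 1)
    (horth : ∀ i ∈ t, ∀ j ∈ t, i ≠ j → ⟪K (u i), K (u j)⟫ = 0)
    (hlam : ∀ i ∈ s, J (u i) ≤ lam i)
    (hSUB0 : ∑ j ∈ t, lam j • Kstar K (K (u j)) ∈ subdiff J 0)
    (hγ : ∀ i ∈ s, 0 < γ i) (hst : s ⊆ t)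
    (hmem : (J (∑ j ∈ s, γ j • u j) / ‖K (∑ j ∈ s, γ j • u j)‖ ^ 2) •
        Kstar K (K (∑ j ∈ s, γ j • u j)) ∈ subdiff J (∑ j ∈ s, γ j • u j)) :
    ∀ i ∈ s, lam i / γ i = J (∑ j ∈ s, γ j • u j) / ‖K (∑ j ∈ s, γ j • u j)‖ ^ 2 := by
  set w := ∑ j ∈ s, γ j • u j
  set μ := J w / ‖K w‖ ^ 2
  have hKw : K w = ∑ j ∈ s, γ j • K (u j) := by simp only [w, map_sum, map_smul]
  have hinner : ∀ i ∈ s, ⟪K w, K (u i)⟫ = γ i := fun i hi => by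
    rw [real_inner_comm, hKw, inner_sum_smul_eq_ite hnorm horth hst γ (hst hi), if_pos hi]
  have hnormsq : ‖K w‖ ^ 2 = ∑ j ∈ s, γ j ^ 2 := by
    rw [← real_inner_self_eq_norm_sq]
    nth_rw 1 [hKw]
    simp only [sum_inner, real_inner_smul_left, sq]
    rw [hKw]
    exact sum_mul_inner_sum_smul (fun i hi => hnorm i (hst hi))
      (fun i hi j hj => horth i (hst hi) j (hst hj)) subset_rfl γ γ
  intro i hi
  have hKw0 : ‖K w‖ ^ 2 ≠ 0 := by
    have : K w ≠ 0 := fun h => (hγ i hi).ne' (by rw [← hinner i hi, h, inner_zero_left])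
    positivity
  have hpw : (μ • Kstar K (K w)) w = J w := by
    rw [smul_apply, Kstar_apply, real_inner_self_eq_norm_sq, smul_eq_mul,
      div_mul_cancel₀ _ hKw0]
  have hle : ∀ k ∈ s, μ * γ k ≤ lam k := fun k hk => by
    have := apply_le_of_mem_subdiff hmem hpw (u k)
    rw [smul_apply, Kstar_apply, hinner k hk, smul_eq_mul] at this
    exact this.trans (hlam k hk)
  have hsum : ∑ k ∈ s, lam k * γ k ≤ μ * ∑ k ∈ s, γ k ^ 2 := by
    have := apply_le_of_mem_subdiff hSUB0 (by rw [map_zero, hJ0]) w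
    simp only [_root_.sum_apply, smul_apply, Kstar_apply, smul_eq_mul] at this
    rw [hKw, sum_mul_inner_sum_smul hnorm horth hst lam γ] at this
    rwa [← hnormsq, div_mul_cancel₀ _ hKw0]
  exact div_eq_of_eq_mul (hγ i hi).ne' (eq_mul_of_sum_mul_le hγ hle hsum i hi)

end Fusion

theorem impossible_singular_vector_fusion_general
    {U H : Type*} [NormedAddCommGroup U] [NormedSpace ℝ U]
    [NormedAddCommGroup H] [InnerProductSpace ℝ H]
    (K : U →L[ℝ] H) (J : U → ℝ)
    (hhom : ∀ (c : ℝ) (x : U), J (c • x) = |c| * J x)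
    (n : ℕ) (u : ℕ → U) (lam γ : ℕ → ℝ)
    (hnorm : ∀ j < n, ‖K (u j)‖ = 1)
    (hlam : ∀ j < n, lam j = J (u j))
    (horth : ∀ i < n, ∀ j < n, i ≠ j → ⟪K (u i), K (u j)⟫ = 0)
    (hSUB0 : ∀ k, 1 ≤ k → k ≤ n →
      (∑ j ∈ range k, lam j • Kstar K (K (u j))) ∈ subdiff J 0)
    (hγ : ∀ j < n, 0 < γ j)
    (m : ℕ) (hm : 2 ≤ m) (idx : ℕ → ℕ)
    (hidx : ∀ k < m, idx k < n)
    (hidxord : ∀ k, k + 1 < m →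
      lam (idx k) / γ (idx k) < lam (idx (k + 1)) / γ (idx (k + 1))) :
    ¬ ((J (∑ k ∈ range m, γ (idx k) • u (idx k)) /
          ‖K (∑ k ∈ range m, γ (idx k) • u (idx k))‖ ^ 2) •
        Kstar K (K (∑ k ∈ range m, γ (idx k) • u (idx k))) ∈
          subdiff J (∑ k ∈ range m, γ (idx k) • u (idx k))) := by
  intro hmem
  have hinj : Set.InjOn idx (range m) := injOn_range_of_lt_succ (r := fun j => lam j / γ j) hidxord
  rw [← sum_image (f := fun j => γ j • u j) hinj] at hmem
  have hsub : (range m).image idx ⊆ range n :=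
    image_subset_iff.2 fun k hk => mem_range.2 (hidx k (mem_range.1 hk))
  have hJ0 : J 0 = 0 := by simpa using hhom 0 0
  have hratio := div_eq_of_fusion_mem_subdiff hJ0
    (fun i hi => hnorm i (mem_range.1 hi))
    (fun i hi j hj => horth i (mem_range.1 hi) j (mem_range.1 hj))
    (fun i hi => (hlam i (mem_range.1 (hsub hi))).ge)
    (hSUB0 n (Nat.one_le_of_lt (hidx 0 (by omega))) le_rfl)
    (fun i hi => hγ i (mem_range.1 (hsub hi))) hsub hmem
  have h0 := hratio (idx 0) (mem_image_of_mem idx (mem_range.2 (by omega)))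
  have h1 := hratio (idx 1) (mem_image_of_mem idx (mem_range.2 hm))
  exact (hidxord 0 hm).ne (h0.trans h1.symm)

/-- Impossible singular vector fusion: under orthogonality and SUB0, no weighted sum of
two or more of the singular vectors can itself be a singular vector. -/
theorem impossible_singular_vector_fusion
    {U H : Type*} [NormedAddCommGroup U] [NormedSpace ℝ U]
    [NormedAddCommGroup H] [InnerProductSpace ℝ H]
    (K : U →L[ℝ] H) (J : U → ℝ)
    (hconv : ConvexOn ℝ Set.univ J)
    (hlsc : LowerSemicontinuous J)
    (hhom : ∀ (c : ℝ) (x : U), J (c • x) = |c| * J x)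
    (n : ℕ) (u : ℕ → U) (lam γ : ℕ → ℝ)
    (hsv : ∀ j < n, (lam j • Kstar K (K (u j))) ∈ subdiff J (u j))
    (hnorm : ∀ j < n, ‖K (u j)‖ = 1)
    (hlam : ∀ j < n, lam j = J (u j))
    (hlampos : ∀ j < n, 0 < lam j)
    (horth : ∀ i < n, ∀ j < n, i ≠ j → ⟪K (u i), K (u j)⟫ = 0)
    (hSUB0 : ∀ k, 1 ≤ k → k ≤ n →
      (∑ j ∈ range k, lam j • Kstar K (K (u j))) ∈ subdiff J 0)
    (hγ : ∀ j < n, 0 < γ j)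
    (hord : ∀ j, j + 1 < n → lam j / γ j < lam (j + 1) / γ (j + 1))
    (m : ℕ) (hm : 2 ≤ m) (idx : ℕ → ℕ)
    (hidx : ∀ k < m, idx k < n)
    (hidxord : ∀ k, k + 1 < m →
      lam (idx k) / γ (idx k) < lam (idx (k + 1)) / γ (idx (k + 1))) :
    ¬ ((J (∑ k ∈ range m, γ (idx k) • u (idx k)) /
          ‖K (∑ k ∈ range m, γ (idx k) • u (idx k))‖ ^ 2) •
        Kstar K (K (∑ k ∈ range m, γ (idx k) • u (idx k))) ∈
          subdiff J (∑ k ∈ range m, γ (idx k) • u (idx k))) :=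
  impossible_singular_vector_fusion_general K J hhom n u lam γ hnorm hlam horth hSUB0 hγ m hm idx
    hidx hidxord
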